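/- arXiv:1601.02275 — 3 statements merged into one kernel-verified Lean document; each statement's English description precedes it below -/
import Mathlib

section
/- Let Γ be a countable discrete group, L : Γ → ℕ a function, and C_n := {γ ∈ Γ : L(γ) = n}. Assume the Jolissaint hypothesis: there exists c > 0 such that for all k, l, m ∈ ℕ and all finitely supported f, g : Γ → ℂ with supp f ⊆ C_k and supp g ⊆ C_l, one has ‖(f*g)·χ_{C_m}‖₂ ≤ c‖f‖₂‖g‖₂ whenever |k−l| ≤ m ≤ k+l, and (f*g)·χ_{C_m} = 0 whenever m < |k−l| or m > k+l. Then there exists C > 0 such that for every k ≥ 1, every m ∈ ℕ, every finitely supported f : Γ → ℂ with supp f ⊆ C_k, and every g ∈ ℓ²(Γ): ‖(f*g)·χ_{C_m}‖₂ ≤ C · k^{1/2} · ‖f‖₂ · (Σ_{l=0}^{2·min(k,m)} ‖g·χ_{C_{m+k−l}}‖₂²)^{1/2}. -/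
/-!
The vanishing half of the Jolissaint hypothesis, tested on point masses `δ_s * δ_t = δ_{st}`,
says that `L` obeys the triangle inequalities `|L s - L t| ≤ L (s t) ≤ L s + L t`. Hence, for
`f` supported on `C_k` and `γ ∈ C_m`, only the values of `g` on the `2 min(k, m) + 1` spheres
`C_l` with `|m - k| ≤ l ≤ m + k` contribute to `(f * g)(γ)`. Splitting `g` along these spheres,
the triangle inequality and the Jolissaint bound on each piece give
`‖(f * g) χ_{C_m}‖ ≤ c ‖f‖ ∑_l ‖g χ_{C_l}‖`, and Cauchy–Schwarz turns the sum into
`√(2 min(k, m) + 1) ≤ √(3k)` times the ℓ² sum. For finitely supported `g` all functions involved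
are finitely supported; a general `g ∈ ℓ²` is handled by noting that on a finite set of points
`f * g` agrees with `f * (g χ_S)` for a suitable finite `S`.
-/

open scoped ENNReal

/-- The ℓ² norm of a function on a discrete group. -/
noncomputable def l2norm {Γ : Type*} (h : Γ → ℂ) : ℝ :=
  (∑' γ, ‖h γ‖ ^ 2) ^ (1/2 : ℝ)

/-- Convolution of functions on a group: `(f*g)(γ) = ∑ₛ f(s) g(s⁻¹γ)`. -/
noncomputable def conv {Γ : Type*} [Group Γ] (f g : Γ → ℂ) : Γ → ℂ :=
  fun γ => ∑' s, f s * g (s⁻¹ * γ)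

/-- Pointwise product of `h` with the characteristic function of `A`. -/
noncomputable def restrict {Γ : Type*} (h : Γ → ℂ) (A : Set Γ) : Γ → ℂ :=
  fun γ => A.indicator h γ

open Function
open scoped Pointwise

section L2

variable {Γ : Type*}

lemma memℓp_two_iff {h : Γ → ℂ} : Memℓp h 2 ↔ Summable fun γ => ‖h γ‖ ^ 2 := by
  rw [memℓp_gen_iff (by norm_num)]
  norm_num

lemma memℓp_two_of_support_finite {h : Γ → ℂ} (hh : (support h).Finite) : Memℓp h 2 :=
  (memℓp_zero hh).of_exponent_ge bot_le

lemma support_restrict_subset (h : Γ → ℂ) (A : Set Γ) : support (restrict h A) ⊆ A ∩ support h :=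
  fun γ hγ => by simp_all [restrict]

lemma finite_support_restrict {A : Set Γ} (hA : A.Finite) (h : Γ → ℂ) :
    (support (restrict h A)).Finite :=
  hA.subset ((support_restrict_subset h A).trans Set.inter_subset_left)

lemma memℓp_restrict {p : ℝ≥0∞} {h : Γ → ℂ} (hh : Memℓp h p) (A : Set Γ) :
    Memℓp (restrict h A) p :=
  hh.mono' fun γ => norm_indicator_le_norm_self h γ

lemma norm_restrict_restrict_le (h : Γ → ℂ) (A B : Set Γ) (γ : Γ) :
    ‖restrict (restrict h B) A γ‖ ≤ ‖restrict h A γ‖ := by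
  show ‖A.indicator (B.indicator h) γ‖ ≤ ‖A.indicator h γ‖
  rw [Set.indicator_indicator]
  exact norm_indicator_le_of_subset Set.inter_subset_left h γ

lemma l2norm_eq_sqrt (h : Γ → ℂ) : l2norm h = √(∑' γ, ‖h γ‖ ^ 2) :=
  (Real.sqrt_eq_rpow _).symm

lemma l2norm_nonneg (h : Γ → ℂ) : 0 ≤ l2norm h := by
  rw [l2norm_eq_sqrt]
  positivity

lemma l2norm_coe_lp (G : lp (fun _ : Γ => ℂ) 2) : l2norm ⇑G = ‖G‖ := by
  rw [lp.norm_eq_tsum_rpow (by norm_num)]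
  norm_num [l2norm]

lemma l2norm_mono {a b : Γ → ℂ} (hb : Memℓp b 2) (hab : ∀ γ, ‖a γ‖ ≤ ‖b γ‖) :
    l2norm a ≤ l2norm b := by
  have hb' := memℓp_two_iff.1 hb
  have hsq (γ : Γ) : ‖a γ‖ ^ 2 ≤ ‖b γ‖ ^ 2 := pow_le_pow_left₀ (norm_nonneg _) (hab γ) 2
  rw [l2norm_eq_sqrt, l2norm_eq_sqrt]
  exact Real.sqrt_le_sqrt <|
    (hb'.of_nonneg_of_le (fun _ => by positivity) hsq).tsum_le_tsum hsq hb'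

lemma l2norm_sum_le {ι : Type*} (J : Finset ι) (h : ι → Γ → ℂ) (hh : ∀ j, Memℓp (h j) 2) :
    l2norm (∑ j ∈ J, h j) ≤ ∑ j ∈ J, l2norm (h j) := by
  let G (j : ι) : lp (fun _ : Γ => ℂ) 2 := ⟨h j, hh j⟩
  have hsum : ∑ j ∈ J, h j = ⇑(∑ j ∈ J, G j) := by rw [lp.coeFn_sum]
  rw [hsum, l2norm_coe_lp]
  exact (norm_sum_le _ _).trans_eq (Finset.sum_congr rfl fun j _ => (l2norm_coe_lp (G j)).symm)

lemma l2norm_le_of_forall_finset {h : Γ → ℂ} {B : ℝ}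
    (H : ∀ F : Finset Γ, ∃ h' : Γ → ℂ, Memℓp h' 2 ∧ Set.EqOn h h' F ∧ l2norm h' ≤ B) :
    l2norm h ≤ B := by
  have hB : 0 ≤ B := by
    obtain ⟨h', -, -, hh'⟩ := H ∅
    exact (l2norm_nonneg h').trans hh'
  rw [l2norm_eq_sqrt, Real.sqrt_le_left hB]
  refine Real.tsum_le_of_sum_le (fun _ => by positivity) fun F => ?_
  obtain ⟨h', hh', hEq, hle⟩ := H F
  calc ∑ γ ∈ F, ‖h γ‖ ^ 2 = ∑ γ ∈ F, ‖h' γ‖ ^ 2 := Finset.sum_congr rfl fun γ hγ => by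
          rw [hEq hγ]
    _ ≤ ∑' γ, ‖h' γ‖ ^ 2 := (memℓp_two_iff.1 hh').sum_le_tsum F fun _ _ => by positivity
    _ = l2norm h' ^ 2 := by rw [l2norm_eq_sqrt, Real.sq_sqrt (tsum_nonneg fun _ => by positivity)]
    _ ≤ B ^ 2 := pow_le_pow_left₀ (l2norm_nonneg h') hle 2

end L2

lemma sum_range_le_sqrt_three_mul_sqrt_sum_sq (a : ℕ → ℝ) {k : ℕ} (hk : 1 ≤ k) (m : ℕ) :
    ∑ j ∈ Finset.range (2 * min k m + 1), a j ≤
      √3 * √k * √(∑ j ∈ Finset.range (2 * min k m + 1), a j ^ 2) := by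
  calc ∑ j ∈ Finset.range (2 * min k m + 1), a j
      ≤ √(2 * min k m + 1 : ℕ) * √(∑ j ∈ Finset.range (2 * min k m + 1), a j ^ 2) := by
        simpa using Real.sum_mul_le_sqrt_mul_sqrt (Finset.range (2 * min k m + 1)) 1 a
    _ ≤ √3 * √k * √(∑ j ∈ Finset.range (2 * min k m + 1), a j ^ 2) := by
        rw [← Real.sqrt_mul (by norm_num : (0 : ℝ) ≤ 3)]
        gcongr
        exact_mod_cast (by omega : 2 * min k m + 1 ≤ 3 * k)

section Convolution

variable {Γ : Type*} [Group Γ]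

lemma conv_apply_eq_sum {f : Γ → ℂ} {F : Finset Γ} (hF : support f ⊆ F) (g : Γ → ℂ) (γ : Γ) :
    conv f g γ = ∑ s ∈ F, f s * g (s⁻¹ * γ) :=
  tsum_eq_sum fun s hs => by simp [notMem_support.1 fun h => hs (hF h)]

lemma support_conv_subset (f g : Γ → ℂ) : support (conv f g) ⊆ support f * support g := by
  intro γ hγ
  obtain ⟨s, hs⟩ : ∃ s, f s * g (s⁻¹ * γ) ≠ 0 := by
    by_contra! h
    exact hγ (by simp [conv, h])
  exact ⟨s, left_ne_zero_of_mul hs, s⁻¹ * γ, right_ne_zero_of_mul hs, mul_inv_cancel_left s γ⟩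

lemma finite_support_restrict_conv {f g : Γ → ℂ} (hf : (support f).Finite)
    (hg : (support g).Finite) (A : Set Γ) : (support (restrict (conv f g) A)).Finite :=
  (hf.mul hg).subset <| (support_restrict_subset _ _).trans <|
    Set.inter_subset_right.trans (support_conv_subset f g)

lemma conv_single_single [DecidableEq Γ] (s t : Γ) (a b : ℂ) :
    conv (Pi.single s a) (Pi.single t b) = Pi.single (s * t) (a * b) := by
  ext γ
  rw [conv, tsum_eq_single s fun u hu => by simp [hu]]
  by_cases hγ : γ = s * t
  · simp [hγ]
  · simp [hγ, inv_mul_eq_iff_eq_mul]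

lemma l2norm_restrict_conv_le_of_forall_finset {f : Γ → ℂ} (hf : (support f).Finite)
    (g : Γ → ℂ) (A : Set Γ) {B : ℝ}
    (H : ∀ S : Finset Γ, l2norm (restrict (conv f (restrict g S)) A) ≤ B) :
    l2norm (restrict (conv f g) A) ≤ B := by
  classical
  -- On `F`, `f * g` only sees the values of `g` on `(supp f)⁻¹ F`.
  refine l2norm_le_of_forall_finset fun F =>
    ⟨_, memℓp_two_of_support_finite <| finite_support_restrict_conv hf
      (finite_support_restrict (Finset.finite_toSet _) g) A, fun γ hγ => ?_, H (hf.toFinset⁻¹ * F)⟩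
  have hconv : conv f g γ = conv f (restrict g ↑(hf.toFinset⁻¹ * F)) γ := by
    simp only [conv_apply_eq_sum hf.coe_toFinset.ge]
    refine Finset.sum_congr rfl fun s hs => ?_
    rw [restrict, Set.indicator_of_mem (Finset.mul_mem_mul (Finset.inv_mem_inv hs) hγ)]
  simp only [restrict, Set.indicator_apply, hconv]

end Convolution

section Length

variable {Γ : Type*}

def lengthSphere (L : Γ → ℕ) (n : ℕ) : Set Γ := {γ | L γ = n}

lemma sum_restrict_lengthSphere_eq {L : Γ → ℕ} {k m : ℕ} (g : Γ → ℂ) {t : Γ}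
    (ht : ((k : ℤ) - L t).natAbs ≤ m ∧ m ≤ k + L t) :
    ∑ j ∈ Finset.range (2 * min k m + 1), restrict g (lengthSphere L (m + k - j)) t = g t := by
  rw [Finset.sum_eq_single (m + k - L t)]
  · simp [restrict, lengthSphere]
    omega
  · intro j hj hne
    simp [restrict, lengthSphere] at hj ⊢
    omega
  · intro h
    simp at h
    omega

variable [Group Γ]

lemma length_triangle_of_restrict_conv_eq_zero (L : Γ → ℕ)
    (hvan : ∀ (k l m : ℕ) (f g : Γ → ℂ),
      (support f).Finite → support f ⊆ lengthSphere L k →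
      (support g).Finite → support g ⊆ lengthSphere L l →
      m < ((k : ℤ) - l).natAbs ∨ k + l < m → restrict (conv f g) (lengthSphere L m) = 0)
    (s t : Γ) : ((L s : ℤ) - L t).natAbs ≤ L (s * t) ∧ L (s * t) ≤ L s + L t := by
  classical
  have hsingle (x : Γ) : (support (Pi.single x (1 : ℂ))).Finite ∧
      support (Pi.single x (1 : ℂ)) ⊆ lengthSphere L (L x) :=
    ⟨(Set.finite_singleton x).subset Pi.support_single_subset,
      Pi.support_single_subset.trans (by simp [lengthSphere])⟩
  by_contra hst
  have h := congrFun (hvan (L s) (L t) (L (s * t)) _ _ (hsingle s).1 (hsingle s).2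
    (hsingle t).1 (hsingle t).2 (by omega)) (s * t)
  simp [restrict, lengthSphere, conv_single_single] at h

lemma restrict_conv_lengthSphere_eq_sum {L : Γ → ℕ}
    (hL : ∀ s t : Γ, ((L s : ℤ) - L t).natAbs ≤ L (s * t) ∧ L (s * t) ≤ L s + L t)
    {k : ℕ} {f : Γ → ℂ} (hf : (support f).Finite) (hfk : support f ⊆ lengthSphere L k)
    (g : Γ → ℂ) (m : ℕ) :
    restrict (conv f g) (lengthSphere L m) =
      ∑ j ∈ Finset.range (2 * min k m + 1),
        restrict (conv f (restrict g (lengthSphere L (m + k - j)))) (lengthSphere L m) := by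
  ext γ
  by_cases hγ : γ ∈ lengthSphere L m
  · simp only [Finset.sum_apply, restrict, Set.indicator_of_mem hγ,
      conv_apply_eq_sum hf.coe_toFinset.ge]
    rw [Finset.sum_comm]
    refine Finset.sum_congr rfl fun s hs => ?_
    rw [← Finset.mul_sum]
    congr 1
    have hks : L s = k := hfk (hf.mem_toFinset.1 hs)
    have hw := hL s (s⁻¹ * γ)
    rw [mul_inv_cancel_left, hks, show L γ = m from hγ] at hw
    exact (sum_restrict_lengthSphere_eq g hw).symm
  · simp [restrict, Set.indicator_of_notMem hγ]

lemma l2norm_restrict_conv_le_sum {L : Γ → ℕ}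
    (hL : ∀ s t : Γ, ((L s : ℤ) - L t).natAbs ≤ L (s * t) ∧ L (s * t) ≤ L s + L t) {c : ℝ}
    (hJ : ∀ (k l m : ℕ) (f g : Γ → ℂ),
      (support f).Finite → support f ⊆ lengthSphere L k →
      (support g).Finite → support g ⊆ lengthSphere L l →
      ((k : ℤ) - l).natAbs ≤ m ∧ m ≤ k + l →
      l2norm (restrict (conv f g) (lengthSphere L m)) ≤ c * l2norm f * l2norm g)
    {k : ℕ} {f g : Γ → ℂ} (hf : (support f).Finite) (hfk : support f ⊆ lengthSphere L k)
    (hg : (support g).Finite) (m : ℕ) :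
    l2norm (restrict (conv f g) (lengthSphere L m)) ≤
      c * l2norm f * ∑ j ∈ Finset.range (2 * min k m + 1),
        l2norm (restrict g (lengthSphere L (m + k - j))) := by
  have hgl (l : ℕ) : (support (restrict g (lengthSphere L l))).Finite ∧
      support (restrict g (lengthSphere L l)) ⊆ lengthSphere L l :=
    ⟨hg.subset ((support_restrict_subset g _).trans Set.inter_subset_right),
      (support_restrict_subset g _).trans Set.inter_subset_left⟩
  rw [restrict_conv_lengthSphere_eq_sum hL hf hfk, Finset.mul_sum]
  refine (l2norm_sum_le _ _ fun j =>
      memℓp_two_of_support_finite (finite_support_restrict_conv hf (hgl _).1 _)).trans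
    (Finset.sum_le_sum fun j hj => hJ _ _ _ _ _ hf hfk (hgl _).1 (hgl _).2 ?_)
  simp only [Finset.mem_range] at hj
  omega

end Length

theorem stmt0_general {Γ : Type*} [Group Γ] (L : Γ → ℕ)
    (C : ℕ → Set Γ) (hC : ∀ n, C n = {γ : Γ | L γ = n})
    (hJol : ∃ c > (0 : ℝ), ∀ (k l m : ℕ) (f g : Γ → ℂ),
      (Function.support f).Finite → Function.support f ⊆ C k →
      (Function.support g).Finite → Function.support g ⊆ C l →
      ((((k : ℤ) - l).natAbs ≤ m ∧ m ≤ k + l →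
          l2norm (restrict (conv f g) (C m)) ≤ c * l2norm f * l2norm g) ∧
        (m < ((k : ℤ) - l).natAbs ∨ k + l < m →
          restrict (conv f g) (C m) = 0))) :
    ∃ C' > (0 : ℝ), ∀ (k : ℕ), 1 ≤ k → ∀ (m : ℕ) (f g : Γ → ℂ),
      (Function.support f).Finite → Function.support f ⊆ C k →
      Summable (fun γ => ‖g γ‖ ^ 2) →
      l2norm (restrict (conv f g) (C m)) ≤
        C' * (k : ℝ) ^ (1/2 : ℝ) * l2norm f *
          (∑ l ∈ Finset.range (2 * min k m + 1),
            l2norm (restrict g (C (m + k - l))) ^ 2) ^ (1/2 : ℝ) := by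
  obtain ⟨c, hc, hJ⟩ := hJol
  obtain rfl : C = lengthSphere L := funext hC
  have hL := length_triangle_of_restrict_conv_eq_zero L
    fun k l m f g hf hfk hg hgl => (hJ k l m f g hf hfk hg hgl).2
  refine ⟨c * √3, by positivity, fun k hk m f g hf hfk hg => ?_⟩
  simp only [← Real.sqrt_eq_rpow]
  have hcf : 0 ≤ c * l2norm f := mul_nonneg hc.le (l2norm_nonneg f)
  set a : ℕ → ℝ := fun j => l2norm (restrict g (lengthSphere L (m + k - j)))
  refine l2norm_restrict_conv_le_of_forall_finset hf g _ fun S => ?_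
  calc l2norm (restrict (conv f (restrict g S)) (lengthSphere L m))
      ≤ c * l2norm f * ∑ j ∈ Finset.range (2 * min k m + 1),
          l2norm (restrict (restrict g S) (lengthSphere L (m + k - j))) :=
        l2norm_restrict_conv_le_sum hL
          (fun k l m f g hf hfk hg hgl => (hJ k l m f g hf hfk hg hgl).1) hf hfk
          (finite_support_restrict (Finset.finite_toSet S) g) m
    _ ≤ c * l2norm f * ∑ j ∈ Finset.range (2 * min k m + 1), a j := by
        gcongr with j
        exact l2norm_mono (memℓp_restrict (memℓp_two_iff.2 hg) _) (norm_restrict_restrict_le g _ _)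
    _ ≤ c * l2norm f * (√3 * √k * √(∑ j ∈ Finset.range (2 * min k m + 1), a j ^ 2)) :=
        mul_le_mul_of_nonneg_left (sum_range_le_sqrt_three_mul_sqrt_sum_sq a hk m) hcf
    _ = c * √3 * √k * l2norm f * √(∑ j ∈ Finset.range (2 * min k m + 1), a j ^ 2) := by ring

theorem stmt0 {Γ : Type*} [Group Γ] [Countable Γ] (L : Γ → ℕ)
    (C : ℕ → Set Γ) (hC : ∀ n, C n = {γ : Γ | L γ = n})
    (hJol : ∃ c > (0 : ℝ), ∀ (k l m : ℕ) (f g : Γ → ℂ),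
      (Function.support f).Finite → Function.support f ⊆ C k →
      (Function.support g).Finite → Function.support g ⊆ C l →
      ((((k : ℤ) - l).natAbs ≤ m ∧ m ≤ k + l →
          l2norm (restrict (conv f g) (C m)) ≤ c * l2norm f * l2norm g) ∧
        (m < ((k : ℤ) - l).natAbs ∨ k + l < m →
          restrict (conv f g) (C m) = 0))) :
    ∃ C' > (0 : ℝ), ∀ (k : ℕ), 1 ≤ k → ∀ (m : ℕ) (f g : Γ → ℂ),
      (Function.support f).Finite → Function.support f ⊆ C k →
      Summable (fun γ => ‖g γ‖ ^ 2) →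
      l2norm (restrict (conv f g) (C m)) ≤
        C' * (k : ℝ) ^ (1/2 : ℝ) * l2norm f *
          (∑ l ∈ Finset.range (2 * min k m + 1),
            l2norm (restrict g (C (m + k - l))) ^ 2) ^ (1/2 : ℝ) :=
  stmt0_general L C hC hJol
end

section
/- Let (Z, d) be a separable metric space and let μ be a finite Borel measure on Z. Then the closure in L²(Z, μ; ℂ) of the linear span of the set of indicator functions {χ_B : B ⊆ Z Borel, μ(frontier B) = 0} is equal to all of L²(Z, μ; ℂ). -/
/-! A measurable set `s` of finite measure is approximated from inside by a closed set `F`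
(finite measures on metric spaces are weakly regular), and `F` from outside by its thickenings
`thickening r F`, whose measures tend to `μ F` as `r → 0`. The frontiers of these thickenings lie
in the pairwise disjoint level sets `{x | infDist x F = r}`, so all but countably many of them are
`μ`-null. Hence sets with null frontier are measure-dense, and indicators of a measure-dense family
span a dense subspace of `Lᵖ` because simple functions are dense. -/

open MeasureTheory Metric Filter Set ENNReal symmDiff Topology

namespace MeasureTheory

section

variable {X : Type*} [MeasurableSpace X] {μ : Measure X} {p : ℝ≥0∞} {s : Set X}

theorem smul_indicatorConstLp {𝕜 E : Type*} [NormedField 𝕜] [NormedAddCommGroup E]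
    [NormedSpace 𝕜 E] (hs : MeasurableSet s) (hμs : μ s ≠ ∞) (c : 𝕜) (x : E) :
    c • indicatorConstLp p hs hμs x = indicatorConstLp p hs hμs (c • x) := by
  simp only [indicatorConstLp, ← MemLp.toLp_const_smul]
  congr 1
  exact (Set.indicator_const_smul s c fun _ ↦ x).symm

theorem Measure.MeasureDense.topologicalClosure_span_indicatorConstLp_one {𝕜 : Type*}
    [NormedField 𝕜] [Fact (1 ≤ p)] {𝒜 : Set (Set X)} (h𝒜 : μ.MeasureDense 𝒜) (hp : p ≠ ∞) :
    (Submodule.span 𝕜 {f : Lp 𝕜 p μ | ∃ (s : Set X) (hs : MeasurableSet s) (hμs : μ s ≠ ∞),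
      s ∈ 𝒜 ∧ f = indicatorConstLp p hs hμs 1}).topologicalClosure = ⊤ := by
  have : Fact (p ≠ ∞) := ⟨hp⟩
  set S := (Submodule.span 𝕜 {f : Lp 𝕜 p μ | ∃ (s : Set X) (hs : MeasurableSet s)
    (hμs : μ s ≠ ∞), s ∈ 𝒜 ∧ f = indicatorConstLp p hs hμs 1}).topologicalClosure
  have hone : ∀ (s : Set X) (hs : MeasurableSet s) (hμs : μ s ≠ ∞),
      indicatorConstLp p hs hμs (1 : 𝕜) ∈ S := by
    intro s hs hμs
    refine closure_mono ?_ (h𝒜.indicatorConstLp_subset_closure p 1 ⟨s, hs, hμs, rfl⟩)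
    rintro - ⟨t, ht, hμt, rfl⟩
    exact Submodule.subset_span ⟨t, h𝒜.measurable t ht, hμt, ht, rfl⟩
  refine eq_top_iff.2 fun f _ ↦ Lp.induction hp (· ∈ S) (fun c s hs hμs ↦ ?_)
    (fun _ _ _ _ _ hf hg ↦ S.add_mem hf hg) (Submodule.isClosed_topologicalClosure _) f
  rw [Lp.simpleFunc.coe_indicatorConst, ← mul_one c, ← smul_eq_mul, ← smul_indicatorConstLp]
  exact S.smul_mem c (hone s hs hμs.ne)

end

section

variable {X : Type*} [PseudoMetricSpace X] [MeasurableSpace X]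

theorem _root_.IsClosed.exists_null_frontier_thickening_measure_sdiff_lt [OpensMeasurableSpace X]
    {F : Set X} (hF : IsClosed F) (μ : Measure X) [IsFiniteMeasure μ] {ε : ℝ≥0∞} (hε : ε ≠ 0) :
    ∃ r > 0, μ (frontier (thickening r F)) = 0 ∧ μ (thickening r F \ F) < ε := by
  have hlim : Tendsto (fun r ↦ μ (thickening r F)) (𝓝[>] 0) (𝓝 (μ F)) :=
    tendsto_measure_thickening_of_isClosed ⟨1, one_pos, measure_ne_top μ _⟩ hF
  obtain ⟨δ, hδ, hsmall⟩ := mem_nhdsGT_iff_exists_Ioo_subset.1 <|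
    hlim.eventually (gt_mem_nhds (ENNReal.lt_add_right (measure_ne_top μ F) hε))
  obtain ⟨r, hr, hfrontier⟩ := exists_null_frontier_thickening μ F (mem_Ioi.1 hδ)
  exact ⟨r, hr.1, hfrontier, measure_sdiff_lt_of_lt_add hF.nullMeasurableSet
    (self_subset_thickening hr.1 F) (measure_ne_top μ F) (hsmall hr)⟩

theorem Measure.measureDense_null_frontier [BorelSpace X] (μ : Measure X) [IsFiniteMeasure μ] :
    μ.MeasureDense {s | MeasurableSet s ∧ μ (frontier s) = 0} where
  measurable _ hs := hs.1
  approx s hs hμs ε hε := by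
    have hε2 : ENNReal.ofReal ε / 2 ≠ 0 := by simpa using hε
    obtain ⟨F, hFs, hF, hsF⟩ := hs.exists_isClosed_sdiff_lt hμs hε2
    obtain ⟨r, hr, hfrontier, hFr⟩ := hF.exists_null_frontier_thickening_measure_sdiff_lt μ hε2
    refine ⟨thickening r F, ⟨isOpen_thickening.measurableSet, hfrontier⟩, ?_⟩
    calc μ (s ∆ thickening r F) ≤ μ (s \ F ∪ thickening r F \ F) :=
          measure_mono <| union_subset_union
            (sdiff_subset_sdiff_right (self_subset_thickening hr F)) (sdiff_subset_sdiff_right hFs)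
      _ ≤ μ (s \ F) + μ (thickening r F \ F) := measure_union_le _ _
      _ < ENNReal.ofReal ε / 2 + ENNReal.ofReal ε / 2 := ENNReal.add_lt_add hsF hFr
      _ = ENNReal.ofReal ε := ENNReal.add_halves _

end

end MeasureTheory

theorem stmt5_general {Z : Type*} [MetricSpace Z]
    [MeasurableSpace Z] [BorelSpace Z] (μ : Measure Z) [IsFiniteMeasure μ] :
    (Submodule.span ℂ
        {f : Lp ℂ 2 μ | ∃ (B : Set Z) (hB : MeasurableSet B) (hμB : μ B ≠ ⊤),
          μ (frontier B) = 0 ∧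
            f = indicatorConstLp 2 hB hμB (1 : ℂ)}).topologicalClosure = ⊤ := by
  have hdense := μ.measureDense_null_frontier.topologicalClosure_span_indicatorConstLp_one
    (𝕜 := ℂ) (p := 2) ofNat_ne_top
  refine eq_top_iff.2 (hdense.ge.trans (Submodule.topologicalClosure_mono (Submodule.span_mono ?_)))
  rintro - ⟨B, hB, hμB, ⟨-, hfrontier⟩, rfl⟩
  exact ⟨B, hB, hμB, hfrontier, rfl⟩

theorem stmt5 {Z : Type*} [MetricSpace Z] [TopologicalSpace.SeparableSpace Z]
    [MeasurableSpace Z] [BorelSpace Z] (μ : Measure Z) [IsFiniteMeasure μ] :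
    (Submodule.span ℂ
        {f : Lp ℂ 2 μ | ∃ (B : Set Z) (hB : MeasurableSet B) (hμB : μ B ≠ ⊤),
          μ (frontier B) = 0 ∧
            f = indicatorConstLp 2 hB hμB (1 : ℂ)}).topologicalClosure = ⊤ :=
  stmt5_general μ
end

section
/- Let (X, 𝒜, μ) be a σ-finite measure space and let p be a bounded linear operator on the real Hilbert space L²(X, μ; ℝ). Suppose that p is an orthogonal projection (p∘p = p and ⟨p f, g⟩ = ⟨f, p g⟩ for all f, g), and that both p and 1−p are positive operators, i.e., they map the cone {f ∈ L²(μ) : f ≥ 0 μ-a.e.} into itself. Then there exists a measurable set B ∈ 𝒜 such that p is the multiplication operator by the indicator function of B, i.e., p f = χ_B · f (as elements of L²) for every f ∈ L²(X, μ; ℝ). Conversely, for every measurable B, multiplication by χ_B is an orthogonal projection p such that p and 1−p are positive. -/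
/-!
Fix `w ∈ L²` with `w > 0` a.e. (σ-finiteness) and put `u = p w`, `v = w - p w`, `B = {u > 0}`.
For `f ≥ 0`, self-adjointness and idempotence give `p f ⊥ v` and `f - p f ⊥ u`; all four
functions are nonnegative, so `p f = 0` where `v > 0` and `p f = f` where `u > 0`. Since
`u + v = w > 0`, this says `p f = χ_B f`, and writing `f = f⁺ - f⁻` extends it to every `f`.
-/

open MeasureTheory
open scoped ENNReal InnerProductSpace

theorem eq_of_eqOn_nonneg {M N F : Type*} [Lattice M] [AddGroup M] [AddLeftMono M] [AddGroup N]
    [FunLike F M N] [AddMonoidHomClass F M N] (T S : F) (h : ∀ a, 0 ≤ a → T a = S a) (a : M) :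
    T a = S a := by
  rw [← posPart_sub_negPart a, map_sub, map_sub, h _ (posPart_nonneg a), h _ (negPart_nonneg a)]

namespace MeasureTheory

variable {α E : Type*} [MeasurableSpace α] {μ : Measure α}

theorem exists_ae_pos_memL2 (μ : Measure α) [SigmaFinite μ] :
    ∃ w : Lp ℝ 2 μ, ∀ᵐ x ∂μ, 0 < w x := by
  obtain ⟨g, g_pos, g_meas, g_lt⟩ := exists_pos_lintegral_lt_of_sigmaFinite μ one_ne_zero
  have g_int : Integrable (fun x => (g x : ℝ)) μ :=
    ⟨g_meas.coe_nnreal_real.aestronglyMeasurable, by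
      simpa [HasFiniteIntegral] using g_lt.trans ENNReal.one_lt_top⟩
  have sqrt_memLp : MemLp (fun x => √(g x : ℝ)) 2 μ :=
    (memLp_two_iff_integrable_sq (by fun_prop)).2
      (g_int.congr (ae_of_all _ fun x => (Real.sq_sqrt (g x).2).symm))
  exact ⟨sqrt_memLp.toLp _, sqrt_memLp.coeFn_toLp.mono fun x hx => hx ▸ Real.sqrt_pos.2 (g_pos x)⟩

namespace Lp

theorem ae_mul_eq_zero_of_inner_eq_zero {f g : Lp ℝ 2 μ} (hf : 0 ≤ᵐ[μ] f) (hg : 0 ≤ᵐ[μ] g)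
    (h : ⟪f, g⟫_ℝ = 0) : ∀ᵐ x ∂μ, f x * g x = 0 := by
  have integrable_mul : Integrable (fun x => f x * g x) μ := by
    simpa [mul_comm] using L2.integrable_inner (𝕜 := ℝ) f g
  have integral_mul : ∫ x, f x * g x ∂μ = 0 := by
    simpa [L2.inner_def, mul_comm] using h
  have mul_ae_nonneg : 0 ≤ᵐ[μ] fun x => f x * g x := by
    filter_upwards [hf, hg] with x hfx hgx using mul_nonneg hfx hgx
  exact (integral_eq_zero_iff_of_nonneg_ae mul_ae_nonneg integrable_mul).1 integral_mul

variable [NormedAddCommGroup E] {p : ℝ≥0∞} [Fact (1 ≤ p)] {s : Set α}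

section indicatorCLM

variable (𝕜 : Type*) [NormedRing 𝕜] [Module 𝕜 E] [IsBoundedSMul 𝕜 E]

noncomputable def indicatorCLM (hs : MeasurableSet s) : Lp E p μ →L[𝕜] Lp E p μ :=
  LinearMap.mkContinuous
    { toFun := fun f => ((Lp.memLp f).indicator hs).toLp _
      map_add' := fun f g => by
        rw [← MemLp.toLp_add]
        exact MemLp.toLp_congr _ _ <| (Lp.coeFn_add f g).indicator.trans <|
          .of_eq (Set.indicator_add' s _ _)
      map_smul' := fun c f => by
        rw [RingHom.id_apply, ← MemLp.toLp_const_smul]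
        exact MemLp.toLp_congr _ _ <| (Lp.coeFn_smul c f).indicator.trans <|
          .of_eq (Set.indicator_const_smul s c _) }
    1 fun f => by
      rw [one_mul, LinearMap.coe_mk, AddHom.coe_mk, Lp.norm_toLp, Lp.norm_def]
      exact ENNReal.toReal_mono (Lp.eLpNorm_ne_top f) (eLpNorm_indicator_le _)

variable {𝕜}

theorem indicatorCLM_apply (hs : MeasurableSet s) (f : Lp E p μ) :
    indicatorCLM 𝕜 hs f = ((Lp.memLp f).indicator hs).toLp _ :=
  rfl

theorem coeFn_indicatorCLM (hs : MeasurableSet s) (f : Lp E p μ) :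
    indicatorCLM 𝕜 hs f =ᵐ[μ] s.indicator f := by
  rw [indicatorCLM_apply]
  exact MemLp.coeFn_toLp _

theorem indicatorCLM_indicatorCLM (hs : MeasurableSet s) (f : Lp E p μ) :
    indicatorCLM 𝕜 hs (indicatorCLM 𝕜 hs f) = indicatorCLM 𝕜 hs f := by
  ext1
  filter_upwards [coeFn_indicatorCLM (𝕜 := 𝕜) hs (indicatorCLM 𝕜 hs f),
    coeFn_indicatorCLM (𝕜 := 𝕜) hs f] with x hx hx'
  by_cases hxs : x ∈ s <;> simp [hx, hx', hxs]

theorem sub_indicatorCLM (hs : MeasurableSet s) (f : Lp E p μ) :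
    f - indicatorCLM 𝕜 hs f = indicatorCLM 𝕜 hs.compl f := by
  ext1
  filter_upwards [Lp.coeFn_sub f (indicatorCLM 𝕜 hs f), coeFn_indicatorCLM (𝕜 := 𝕜) hs f,
    coeFn_indicatorCLM (𝕜 := 𝕜) hs.compl f] with x hsub hs hsc
  rw [hsub, hsc, Set.indicator_compl, Pi.sub_apply, Pi.sub_apply, hs]

theorem indicatorCLM_nonneg [PartialOrder E] (hs : MeasurableSet s) {f : Lp E p μ}
    (hf : 0 ≤ᵐ[μ] f) : 0 ≤ᵐ[μ] indicatorCLM 𝕜 hs f := by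
  filter_upwards [coeFn_indicatorCLM (𝕜 := 𝕜) hs f, hf] with x hx hfx
  rw [hx]
  exact Set.indicator_nonneg (fun _ _ => hfx) x

theorem coeFn_indicatorCLM_eq_mul {R : Type*} [NormedRing R] [Module 𝕜 R] [IsBoundedSMul 𝕜 R]
    (hs : MeasurableSet s) (f : Lp R p μ) :
    indicatorCLM 𝕜 hs f =ᵐ[μ] fun x => s.indicator (fun _ => (1 : R)) x * f x := by
  filter_upwards [coeFn_indicatorCLM (𝕜 := 𝕜) hs f] with x hx
  simp only [hx, ← Set.indicator_mul_left, one_mul]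

end indicatorCLM

theorem inner_indicatorCLM {𝕜 : Type*} [RCLike 𝕜] [InnerProductSpace 𝕜 E] (hs : MeasurableSet s)
    (f g : Lp E 2 μ) : ⟪indicatorCLM 𝕜 hs f, g⟫_𝕜 = ⟪f, indicatorCLM 𝕜 hs g⟫_𝕜 := by
  rw [L2.inner_def, L2.inner_def]
  refine integral_congr_ae ?_
  filter_upwards [coeFn_indicatorCLM (𝕜 := 𝕜) hs f, coeFn_indicatorCLM (𝕜 := 𝕜) hs g]
    with x hf hg
  by_cases hxs : x ∈ s <;> simp [hf, hg, hxs]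

theorem exists_measurableSet_eq_indicatorCLM [SigmaFinite μ] (P : Lp ℝ 2 μ →L[ℝ] Lp ℝ 2 μ)
    (hP_idem : ∀ f, P (P f) = P f) (hP_symm : ∀ f g, ⟪P f, g⟫_ℝ = ⟪f, P g⟫_ℝ)
    (hP_pos : ∀ f : Lp ℝ 2 μ, 0 ≤ᵐ[μ] f → 0 ≤ᵐ[μ] P f)
    (hP_compl_pos : ∀ f : Lp ℝ 2 μ, 0 ≤ᵐ[μ] f → 0 ≤ᵐ[μ] (f - P f : Lp ℝ 2 μ)) :
    ∃ B, ∃ hB : MeasurableSet B, P = indicatorCLM ℝ hB := by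
  obtain ⟨w, hw⟩ := exists_ae_pos_memL2 μ
  have hu : 0 ≤ᵐ[μ] P w := hP_pos w (hw.mono fun _ => le_of_lt)
  have hv : 0 ≤ᵐ[μ] (w - P w : Lp ℝ 2 μ) := hP_compl_pos w (hw.mono fun _ => le_of_lt)
  let B := {x | 0 < P w x}
  have hB : MeasurableSet B := measurableSet_lt measurable_const (Lp.stronglyMeasurable _).measurable
  refine ⟨B, hB, ContinuousLinearMap.ext <| eq_of_eqOn_nonneg _ _ fun f hf => ?_⟩
  rw [← Lp.coeFn_nonneg] at hf
  have hPf_v : ∀ᵐ x ∂μ, P f x * (w - P w : Lp ℝ 2 μ) x = 0 :=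
    ae_mul_eq_zero_of_inner_eq_zero (hP_pos f hf) hv <| by
      rw [hP_symm, map_sub, hP_idem, sub_self, inner_zero_right]
  have hf_Pf_u : ∀ᵐ x ∂μ, (f - P f : Lp ℝ 2 μ) x * P w x = 0 :=
    ae_mul_eq_zero_of_inner_eq_zero (hP_compl_pos f hf) hu <| by
      rw [← hP_symm, map_sub, hP_idem, sub_self, inner_zero_left]
  ext1
  filter_upwards [hPf_v, hf_Pf_u, hu, hw, Lp.coeFn_sub w (P w), Lp.coeFn_sub f (P f),
    coeFn_indicatorCLM (𝕜 := ℝ) hB f] with x hPf_v hf_Pf_u hu hw hv_eq hf_Pf_eq hind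
  rw [hind]
  by_cases hxB : x ∈ B
  · rw [Set.indicator_of_mem hxB]
    rw [hf_Pf_eq, Pi.sub_apply] at hf_Pf_u
    exact (sub_eq_zero.1 ((mul_eq_zero.1 hf_Pf_u).resolve_right hxB.ne')).symm
  · have hu_zero : P w x = 0 := le_antisymm (not_lt.1 hxB) hu
    rw [Set.indicator_of_notMem hxB]
    refine (mul_eq_zero.1 hPf_v).resolve_right ?_
    rw [hv_eq, Pi.sub_apply, hu_zero, sub_zero]
    exact hw.ne'

end Lp

end MeasureTheory

theorem stmt6 {X : Type*} [MeasurableSpace X] (μ : Measure X) [SigmaFinite μ]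
    (p : Lp ℝ 2 μ →L[ℝ] Lp ℝ 2 μ)
    (hproj : ∀ f : Lp ℝ 2 μ, p (p f) = p f)
    (hsa : ∀ f g : Lp ℝ 2 μ, inner (𝕜 := ℝ) (p f) g = inner (𝕜 := ℝ) f (p g))
    (hpos : ∀ f : Lp ℝ 2 μ, (0 : X → ℝ) ≤ᵐ[μ] f → (0 : X → ℝ) ≤ᵐ[μ] (p f))
    (hpos' : ∀ f : Lp ℝ 2 μ, (0 : X → ℝ) ≤ᵐ[μ] f →
      (0 : X → ℝ) ≤ᵐ[μ] ((f - p f : Lp ℝ 2 μ) : X → ℝ)) :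
    (∃ B : Set X, MeasurableSet B ∧
      ∀ f : Lp ℝ 2 μ, (p f : X → ℝ) =ᵐ[μ]
        fun x => B.indicator (fun _ => (1 : ℝ)) x * f x) ∧
    (∀ B : Set X, MeasurableSet B →
      ∃ q : Lp ℝ 2 μ →L[ℝ] Lp ℝ 2 μ,
        (∀ f : Lp ℝ 2 μ, (q f : X → ℝ) =ᵐ[μ]
          fun x => B.indicator (fun _ => (1 : ℝ)) x * f x) ∧
        (∀ f : Lp ℝ 2 μ, q (q f) = q f) ∧
        (∀ f g : Lp ℝ 2 μ, inner (𝕜 := ℝ) (q f) g = inner (𝕜 := ℝ) f (q g)) ∧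
        (∀ f : Lp ℝ 2 μ, (0 : X → ℝ) ≤ᵐ[μ] f → (0 : X → ℝ) ≤ᵐ[μ] (q f)) ∧
        (∀ f : Lp ℝ 2 μ, (0 : X → ℝ) ≤ᵐ[μ] f →
          (0 : X → ℝ) ≤ᵐ[μ] ((f - q f : Lp ℝ 2 μ) : X → ℝ))) := by
  refine ⟨?_, fun B hB => ?_⟩
  · obtain ⟨B, hB, rfl⟩ := Lp.exists_measurableSet_eq_indicatorCLM p hproj hsa hpos hpos'
    exact ⟨B, hB, Lp.coeFn_indicatorCLM_eq_mul hB⟩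
  · refine ⟨Lp.indicatorCLM ℝ hB, Lp.coeFn_indicatorCLM_eq_mul hB,
      Lp.indicatorCLM_indicatorCLM hB, Lp.inner_indicatorCLM hB,
      fun f => Lp.indicatorCLM_nonneg hB, fun f hf => ?_⟩
    rw [Lp.sub_indicatorCLM]
    exact Lp.indicatorCLM_nonneg hB.compl hf
end
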